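/- Let p be a joint PMF on V^n (n > 1) with marginals p_j satisfying p_j(x*_j) > 1 - ε for all j, and q = ∏_j p_j. Then the total variation distance satisfies D_TV(p, q) = (1/2) Σ_z |p(z) - q(z)| < (3n - 1)ε / 2. -/

import Mathlib

/-!
Write `s = ∑ⱼ (1 - pⱼ(x*ⱼ))`, so that `s < nε`. Both `p` and `q` give mass at least `1 - s`
to the single point `x*`: for `p` by the union bound over the events `zⱼ ≠ x*ⱼ`, for `q` by
the Weierstrass product inequality `∏ⱼ cⱼ ≥ 1 - ∑ⱼ (1 - cⱼ)`. Two probability vectors that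
share mass `1 - s` at a point are within total variation distance `s`, and `nε ≤ (3n - 1)ε/2`.
-/

open Finset

theorem one_sub_sum_le_prod {ι : Type*} (s : Finset ι) {c : ι → ℝ}
    (h0 : ∀ i ∈ s, 0 ≤ c i) (h1 : ∀ i ∈ s, c i ≤ 1) :
    1 - ∑ i ∈ s, (1 - c i) ≤ ∏ i ∈ s, c i := by
  classical
  induction s using Finset.induction_on with
  | empty => simp
  | insert a t hat ih =>
    rw [forall_mem_insert] at h0 h1
    rw [sum_insert hat, prod_insert hat]
    have ht := ih h0.2 h1.2
    have hprod : ∏ i ∈ t, c i ≤ 1 := prod_le_one h0.2 h1.2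
    nlinarith [h0.1, h1.1]

theorem sum_abs_sub_le_two_mul_one_sub_min {α : Type*} [Fintype α] {p q : α → ℝ}
    (hp0 : ∀ z, 0 ≤ p z) (hq0 : ∀ z, 0 ≤ q z)
    (hp1 : ∑ z, p z = 1) (hq1 : ∑ z, q z = 1) (x : α) :
    ∑ z, |p z - q z| ≤ 2 * (1 - min (p x) (q x)) := by
  classical
  have hp_tail : ∑ z ∈ univ.erase x, p z = 1 - p x := by
    rw [sum_erase_eq_sub (mem_univ x), hp1]
  have hq_tail : ∑ z ∈ univ.erase x, q z = 1 - q x := by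
    rw [sum_erase_eq_sub (mem_univ x), hq1]
  have htail : ∑ z ∈ univ.erase x, |p z - q z| ≤ ∑ z ∈ univ.erase x, (p z + q z) :=
    sum_le_sum fun z _ => abs_sub_le_iff.2 ⟨by linarith [hq0 z], by linarith [hp0 z]⟩
  rw [← add_sum_erase _ _ (mem_univ x)]
  rw [sum_add_distrib, hp_tail, hq_tail] at htail
  linarith [max_sub_min_eq_abs' (p x) (q x), min_add_max (p x) (q x)]

section Marginal

variable {ι V : Type*} [Fintype ι] [DecidableEq ι] [Fintype V] [DecidableEq V]

def marginal (p : (ι → V) → ℝ) (j : ι) (v : V) : ℝ :=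
  ∑ z : ι → V, if z j = v then p z else 0

variable {p : (ι → V) → ℝ}

theorem marginal_nonneg (hp0 : ∀ z, 0 ≤ p z) (j : ι) (v : V) : 0 ≤ marginal p j v :=
  sum_nonneg fun z _ => by split_ifs <;> simp [hp0 z]

theorem sum_marginal (j : ι) : ∑ v, marginal p j v = ∑ z, p z := by
  simp only [marginal]
  rw [sum_comm]
  simp

theorem marginal_le_one (hp0 : ∀ z, 0 ≤ p z) (hp1 : ∑ z, p z = 1) (j : ι) (v : V) :
    marginal p j v ≤ 1 :=
  calc marginal p j v ≤ ∑ v, marginal p j v :=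
        single_le_sum (fun v _ => marginal_nonneg hp0 j v) (mem_univ v)
    _ = 1 := by rw [sum_marginal, hp1]

theorem sum_prod_marginal (hp1 : ∑ z, p z = 1) : ∑ z : ι → V, ∏ j, marginal p j (z j) = 1 := by
  rw [← Fintype.prod_sum]
  simp [sum_marginal, hp1]

theorem one_sub_marginal (hp1 : ∑ z, p z = 1) (j : ι) (v : V) :
    1 - marginal p j v = ∑ z, if z j = v then 0 else p z := by
  rw [← hp1, marginal, ← sum_sub_distrib]
  exact sum_congr rfl fun z _ => by split_ifs <;> ring

theorem one_sub_le_sum_one_sub_marginal (hp0 : ∀ z, 0 ≤ p z) (hp1 : ∑ z, p z = 1)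
    (x : ι → V) : 1 - p x ≤ ∑ j, (1 - marginal p j (x j)) := by
  have hmiss (z : ι → V) (hz : z ≠ x) : p z ≤ ∑ j, if z j = x j then 0 else p z := by
    obtain ⟨j, hj⟩ := Function.ne_iff.mp hz
    simpa [hj] using single_le_sum (f := fun j => if z j = x j then 0 else p z)
      (fun j _ => by split_ifs <;> simp [hp0 z]) (mem_univ j)
  calc 1 - p x = ∑ z ∈ univ.erase x, p z := by rw [sum_erase_eq_sub (mem_univ x), hp1]
    _ ≤ ∑ z ∈ univ.erase x, ∑ j, if z j = x j then 0 else p z :=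
      sum_le_sum fun z hz => hmiss z (ne_of_mem_erase hz)
    _ ≤ ∑ z, ∑ j, if z j = x j then 0 else p z :=
      sum_le_sum_of_subset_of_nonneg (erase_subset x univ) fun z _ _ =>
        sum_nonneg fun j _ => by split_ifs <;> simp [hp0 z]
    _ = ∑ j, (1 - marginal p j (x j)) := by
      rw [sum_comm]; simp only [one_sub_marginal hp1]

theorem half_sum_abs_sub_prod_marginal_le (hp0 : ∀ z, 0 ≤ p z) (hp1 : ∑ z, p z = 1)
    (x : ι → V) :
    (1 / 2) * ∑ z, |p z - ∏ j, marginal p j (z j)| ≤ ∑ j, (1 - marginal p j (x j)) := by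
  have hq : 1 - ∏ j, marginal p j (x j) ≤ ∑ j, (1 - marginal p j (x j)) := by
    have := one_sub_sum_le_prod univ (fun j _ => marginal_nonneg hp0 j (x j))
      (fun j _ => marginal_le_one hp0 hp1 j (x j))
    linarith
  have htv := sum_abs_sub_le_two_mul_one_sub_min hp0
    (fun z => prod_nonneg fun j _ => marginal_nonneg hp0 j (z j)) hp1 (sum_prod_marginal hp1) x
  have hp := one_sub_le_sum_one_sub_marginal hp0 hp1 x
  have hmin := le_min (sub_le_comm.1 hp) (sub_le_comm.1 hq)
  linarith

end Marginal

/-- For `n > 1`, under high-confidence marginals, the total variation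
distance between the joint `p` and the product of marginals `q` satisfies
`D_TV(p,q) = (1/2) Σ_z |p(z) - q(z)| < (3n-1)ε/2`. -/
theorem stmt_7 {V : Type*} [Fintype V] [DecidableEq V] {n : ℕ} (hn : 1 < n)
    (p : (Fin n → V) → ℝ) (pm : Fin n → V → ℝ) (x' : Fin n → V) (ε : ℝ)
    (hp0 : ∀ z, 0 ≤ p z) (hp1 : ∑ z : Fin n → V, p z = 1)
    (hm : ∀ j v, pm j v = ∑ z : Fin n → V, if z j = v then p z else 0)
    (hconf : ∀ j, pm j (x' j) > 1 - ε) (hε : 0 < ε) :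
    (1 / 2) * (∑ z : Fin n → V, |p z - ∏ j, pm j (z j)|) <
      (3 * (n : ℝ) - 1) * ε / 2 := by
  obtain rfl : pm = marginal p := funext₂ hm
  have : Nonempty (Fin n) := ⟨⟨0, by omega⟩⟩
  have hs : ∑ j, (1 - marginal p j (x' j)) < n * ε := by
    simpa using sum_lt_sum_of_nonempty univ_nonempty fun j _ => sub_lt_comm.1 (hconf j)
  have hn' : (1 : ℝ) < n := by exact_mod_cast hn
  calc (1 / 2) * ∑ z, |p z - ∏ j, marginal p j (z j)|
      ≤ ∑ j, (1 - marginal p j (x' j)) := half_sum_abs_sub_prod_marginal_le hp0 hp1 x'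
    _ < n * ε := hs
    _ ≤ (3 * n - 1) * ε / 2 := by nlinarith
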